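/- arXiv:0904.1967 — 2 statements merged into one kernel-verified Lean document; each statement's English description precedes it below -/
import Mathlib

section
/- If D is a minimal counterexample, then every vertex of D is incident with edges of all three colours. -/
/-- A 3-coloured tournament on vertex type `V`: between any two distinct
vertices there is exactly one directed edge (`beats`), and `colour x y` gives
the colour (one of three: red, blue, green) of the edge from `x` to `y`
(meaningful when `beats x y` holds). -/
structure CTournament (V : Type*) where
  beats : V → V → Prop
  irrefl : ∀ v, ¬ beats v v
  asymm : ∀ v w, beats v w → ¬ beats w v
  total : ∀ v w, v ≠ w → beats v w ∨ beats w v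
  colour : V → V → Fin 3

namespace CTournament

/-- The colour red. -/
def red : Fin 3 := 0
/-- The colour blue. -/
def blue : Fin 3 := 1
/-- The colour green. -/
def green : Fin 3 := 2

variable {V : Type*} (T : CTournament V)

/-- `x` monochromatically dominates `y` in colour `c`: there is a directed
path (with at least one edge) from `x` to `y` all of whose edges have
colour `c`. -/
def Dom (c : Fin 3) (x y : V) : Prop :=
  Relation.TransGen (fun a b => T.beats a b ∧ T.colour a b = c) x y

/-- `x` monochromatically dominates `y` (in some colour). -/
def MDom (x y : V) : Prop := ∃ c, T.Dom c x y

/-- `x` monochromatically dominates `y` in colour `c` within the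
subtournament induced on the vertex set `S`. -/
def DomIn (S : Set V) (c : Fin 3) (x y : V) : Prop :=
  Relation.TransGen (fun a b => a ∈ S ∧ b ∈ S ∧ T.beats a b ∧ T.colour a b = c) x y

/-- `x` monochromatically dominates `y` within the subtournament induced on `S`. -/
def MDomIn (S : Set V) (x y : V) : Prop := ∃ c, T.DomIn S c x y

/-- `T` contains a `T_3`: three vertices spanning a cyclic triangle whose
three edges have three pairwise distinct colours. -/
def HasT3 : Prop :=
  ∃ a b c : V, T.beats a b ∧ T.beats b c ∧ T.beats c a ∧
    T.colour a b ≠ T.colour b c ∧ T.colour b c ≠ T.colour c a ∧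
    T.colour a b ≠ T.colour c a

/-- Vertex `v` is incident with an edge of colour `c`. -/
def IncidentColour (v : V) (c : Fin 3) : Prop :=
  ∃ w, (T.beats v w ∧ T.colour v w = c) ∨ (T.beats w v ∧ T.colour w v = c)

/-- `T` is a minimal counterexample: it contains no `T_3`, no vertex
monochromatically dominates every other vertex, and every proper nonempty
subset of the vertices spans a subtournament containing a vertex that
monochromatically dominates (within that subtournament) every other vertex
of the subset. -/
def MinimalCex : Prop :=
  ¬ T.HasT3 ∧
  (¬ ∃ x : V, ∀ y, y ≠ x → T.MDom x y) ∧
  ∀ S : Set V, S.Nonempty → S ≠ Set.univ →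
    ∃ x ∈ S, ∀ y ∈ S, y ≠ x → T.MDomIn S x y

/-- The permutation `σ` (sending every vertex to its successor) is a directed
Hamilton cycle of `T`: every vertex beats its successor, and all vertices lie
on a single cycle of `σ`. -/
def IsHamCycle (σ : Equiv.Perm V) : Prop :=
  (∀ v, T.beats v (σ v)) ∧ ∀ v w : V, ∃ n : ℕ, (⇑σ)^[n] v = w

/-- The domination property of the Hamilton cycle `σ`: every vertex
monochromatically dominates every vertex other than itself and its
predecessor on the cycle, and no vertex monochromatically dominates its
predecessor. -/
def HamDomProp (σ : Equiv.Perm V) : Prop :=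
  (∀ x y : V, y ≠ x → y ≠ σ.symm x → T.MDom x y) ∧
  ∀ x : V, ¬ T.MDom x (σ.symm x)

/-- The vertex set of the directed subpath `xCy` of the Hamilton cycle whose
successor permutation is `σ`: all vertices reachable from `x` along the cycle
no later than the first visit of `y`. -/
def PathSet (σ : Equiv.Perm V) (x y : V) : Set V :=
  {z | ∃ k : ℕ, (⇑σ)^[k] x = z ∧ ∀ j < k, (⇑σ)^[j] x ≠ y}

/-- `R^+(x)`: the vertices to which `x` sends a red edge. -/
def Rplus (x : V) : Set V := {v | T.beats x v ∧ T.colour x v = red}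
/-- `R^-(x)`: the vertices from which `x` receives a red edge. -/
def Rminus (x : V) : Set V := {v | T.beats v x ∧ T.colour v x = red}
/-- `B^+(x)`: the vertices to which `x` sends a blue edge. -/
def Bplus (x : V) : Set V := {v | T.beats x v ∧ T.colour x v = blue}
/-- `B^-(x)`: the vertices from which `x` receives a blue edge. -/
def Bminus (x : V) : Set V := {v | T.beats v x ∧ T.colour v x = blue}
/-- `R_r^+(x) = {v ∈ R^+(x) : v monochromatically dominates x in red}`. -/
def Rrplus (x : V) : Set V := {v ∈ T.Rplus x | T.Dom red v x}
/-- `R_r^-(x) = {v ∈ R^-(x) : x monochromatically dominates v in red}`. -/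
def Rrminus (x : V) : Set V := {v ∈ T.Rminus x | T.Dom red x v}
/-- `B_b^+(x) = {v ∈ B^+(x) : v monochromatically dominates x in blue}`. -/
def Bbplus (x : V) : Set V := {v ∈ T.Bplus x | T.Dom blue v x}
/-- `B_b^-(x) = {v ∈ B^-(x) : x monochromatically dominates v in blue}`. -/
def Bbminus (x : V) : Set V := {v ∈ T.Bminus x | T.Dom blue x v}

end CTournament

/-!
Suppose `v` misses the colour `c₀`, and let `f x ≠ x` be a vertex that `x` does not dominate.
A proper `f`-invariant set would contain a dominator `x`, which would dominate `f x`; hence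
the orbit `v, f v, f^[2] v, …` is a cycle of length `n ≥ 2` through all vertices, and in every
proper arc of it the last vertex dominates the others. Monochromatic paths into or out of `v` avoid
`c₀`, and as `f^[j-1] v` does not dominate `f^[j] v`, the vertex `v` reaches `f^[j] v` in only
one colour. Now `v` beats `f^[n-1] v`, which does not reach `v` at all, while `v` does not beat
`f v`. If `v` beats `f^[b] v` with colour `φ`, and `f^[b] v` does not reach `v` in the third
colour, let `b' < b` be the last index where `v` does not reach `f^[b'] v` in colour `φ`; the
monochromatic path from `f^[b] v` to `f^[b'] v` inside the arc between them, together with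
`T_3`-freeness, shows that `v` beats `f^[b'] v`, again under the same condition. This descent
cannot go on forever.
-/

theorem fin_three_eq_or_eq {a b c d : Fin 3} (hab : a ≠ b) (hac : a ≠ c) (hbc : b ≠ c)
    (hdc : d ≠ c) : d = a ∨ d = b := by
  revert a b c d; decide

theorem fin_three_exists_ne_ne (a b : Fin 3) : ∃ c, c ≠ a ∧ c ≠ b := by
  revert a b; decide

theorem Nat.exists_last_not {Q : ℕ → Prop} {a b : ℕ} (hab : a ≤ b) (ha : ¬ Q a) :
    ∃ m, a ≤ m ∧ m ≤ b ∧ ¬ Q m ∧ ∀ i, m < i → i ≤ b → Q i := by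
  induction b, hab using Nat.le_induction with
  | base => exact ⟨a, le_rfl, le_rfl, ha, fun _ _ h => absurd h (by omega)⟩
  | succ b _ ih =>
    by_cases hb : Q (b + 1)
    · obtain ⟨m, ham, hmb, hm, hQ⟩ := ih
      refine ⟨m, ham, by omega, hm, fun i hmi hib => ?_⟩
      rcases Nat.lt_or_ge i (b + 1) with h | h
      · exact hQ i hmi (by omega)
      · rwa [show i = b + 1 by omega]
    · exact ⟨b + 1, by omega, le_rfl, hb, fun _ _ h => absurd h (by omega)⟩

namespace CTournament

variable {V : Type*}

section

variable (T : CTournament V)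

def ProperSubsetsDominated : Prop :=
  ∀ S : Set V, S.Nonempty → S ≠ Set.univ →
    ∃ x ∈ S, ∀ y ∈ S, y ≠ x → T.MDomIn S x y

def BeatsWithoutReturn (c₀ : Fin 3) (v w : V) : Prop :=
  T.beats v w ∧ ∀ ψ, ψ ≠ c₀ → ψ ≠ T.colour v w → ¬ T.Dom ψ w v

end

variable {T : CTournament V} {c c₀ : Fin 3} {S : Set V} {v w x y z : V}

theorem Dom.of_beats (h : T.beats x y) (hc : T.colour x y = c) : T.Dom c x y :=
  .single ⟨h, hc⟩

theorem Dom.trans (h₁ : T.Dom c x y) (h₂ : T.Dom c y z) : T.Dom c x z :=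
  Relation.TransGen.trans h₁ h₂

theorem DomIn.dom (h : T.DomIn S c x y) : T.Dom c x y :=
  Relation.TransGen.mono (fun _ _ hab => ⟨hab.2.2.1, hab.2.2.2⟩) x y h

theorem MDomIn.mdom (h : T.MDomIn S x y) : T.MDom x y :=
  let ⟨c, hc⟩ := h; ⟨c, hc.dom⟩

theorem Dom.ne_of_not_incidentColour_left (hv : ¬ T.IncidentColour v c₀) (h : T.Dom c v y) :
    c ≠ c₀ := by
  obtain ⟨w, ⟨hvw, hc⟩, -⟩ := Relation.TransGen.head'_iff.mp h
  rintro rfl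
  exact hv ⟨w, .inl ⟨hvw, hc⟩⟩

theorem Dom.ne_of_not_incidentColour_right (hv : ¬ T.IncidentColour v c₀) (h : T.Dom c y v) :
    c ≠ c₀ := by
  obtain ⟨w, -, hwv, hc⟩ := Relation.TransGen.tail'_iff.mp h
  rintro rfl
  exact hv ⟨w, .inr ⟨hwv, hc⟩⟩

theorem beats_of_not_mdom (hne : x ≠ y) (h : ¬ T.MDom y x) : T.beats x y :=
  (T.total x y hne).resolve_right fun hyx => h ⟨_, .of_beats hyx rfl⟩

/-- At the first vertex `z` of the path with `z → v`, its predecessor `y` gives a cyclic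
triangle `v → y → z → v` coloured `φ, χ, ψ`: a `T_3`, unless `χ = ψ`, and then `x` reaches `v`
in `ψ`. -/
theorem beats_of_domIn (hT3 : ¬ T.HasT3) {φ χ ψ : Fin 3} (hφχ : φ ≠ χ) (hφψ : φ ≠ ψ)
    (hout : ∀ y ∈ S, T.beats v y → T.colour v y = φ)
    (hin : ∀ y ∈ S, T.beats y v → T.colour y v = ψ)
    (hx : T.beats v x) (hxv : ¬ T.Dom ψ x v) (hxz : T.DomIn S χ x z) : T.beats v z := by
  have step : ∀ y z, T.beats v y → y ∈ S ∧ z ∈ S ∧ T.beats y z ∧ T.colour y z = χ →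
      T.Dom χ x z → T.beats v z := by
    rintro y z hvy ⟨hy, hz, hyz, hχ⟩ hxz
    by_contra hvz
    have hzv : T.beats z v := (T.total z v fun h => T.asymm v y hvy (h ▸ hyz)).resolve_right hvz
    by_cases hχψ : χ = ψ
    · exact hxv (hχψ ▸ hxz.trans (.of_beats hzv (hin z hz hzv ▸ hχψ.symm)))
    · exact hT3 ⟨v, y, z, hvy, hyz, hzv, by rw [hout y hy hvy, hχ]; exact hφχ,
        by rw [hχ, hin z hz hzv]; exact hχψ, by rw [hout y hy hvy, hin z hz hzv]; exact hφψ⟩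
  induction hxz with
  | single h => exact step x _ hx h (.of_beats h.2.2.1 h.2.2.2)
  | tail hxy h ih => exact step _ _ ih h (DomIn.dom (.tail hxy h))

open Function Set

section Iterate

variable {f : V → V}

theorem ProperSubsetsDominated.eq_univ_of_mapsTo (hmin : T.ProperSubsetsDominated)
    (hf : ∀ x, ¬ T.MDom x (f x)) (hne : ∀ x, f x ≠ x) (hS : S.Nonempty)
    (hfS : MapsTo f S S) : S = univ := by
  by_contra hSu
  obtain ⟨x, hx, hdom⟩ := hmin S hS hSu
  exact hf x (hdom (f x) (hfS hx) (hne x)).mdom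

theorem ProperSubsetsDominated.mem_periodicPts (hmin : T.ProperSubsetsDominated)
    (hf : ∀ x, ¬ T.MDom x (f x)) (hne : ∀ x, f x ≠ x) (v : V) : v ∈ periodicPts f := by
  have horbit : range (f^[·] (f v)) = univ :=
    hmin.eq_univ_of_mapsTo hf hne ⟨f v, 0, rfl⟩ <| by
      rintro _ ⟨k, rfl⟩
      exact ⟨k + 1, iterate_succ_apply' f k (f v)⟩
  obtain ⟨k, hk⟩ : v ∈ range (f^[·] (f v)) := horbit ▸ mem_univ v
  exact mk_mem_periodicPts k.succ_pos hk

theorem two_le_minimalPeriod (hne : ∀ x, f x ≠ x) (hv : v ∈ periodicPts f) :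
    2 ≤ minimalPeriod f v := by
  have := minimalPeriod_pos_of_mem_periodicPts hv
  have : minimalPeriod f v ≠ 1 := fun h => hne v (minimalPeriod_eq_one_iff_isFixedPt.mp h)
  omega

theorem ProperSubsetsDominated.mdomIn_iterate (hmin : T.ProperSubsetsDominated)
    (hf : ∀ x, ¬ T.MDom x (f x)) {b c m i : ℕ} (hc : c < minimalPeriod f v)
    (hm : m < minimalPeriod f v) (hmbc : m ∉ Icc b c) (hi : i ∈ Ico b c) :
    T.MDomIn ((f^[·] v) '' Icc b c) (f^[c] v) (f^[i] v) := by
  have hinj : InjOn (f^[·] v) (Icc b c) :=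
    iterate_injOn_Iio_minimalPeriod.mono fun k hk => lt_of_le_of_lt hk.2 hc
  have hS : (f^[·] v) '' Icc b c ≠ univ := by
    intro h
    obtain ⟨k, hk, hkm⟩ : f^[m] v ∈ (f^[·] v) '' Icc b c := h ▸ mem_univ _
    exact hmbc (iterate_injOn_Iio_minimalPeriod (lt_of_le_of_lt hk.2 hc) hm hkm ▸ hk)
  obtain ⟨_, ⟨k, hk, rfl⟩, hdom⟩ :=
    hmin _ ⟨_, mem_image_of_mem _ (Ico_subset_Icc_self hi)⟩ hS
  -- the dominator is the last vertex, as each other one fails to dominate its successor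
  obtain rfl : k = c := by
    by_contra hkc
    have hk1 : k + 1 ∈ Icc b c := ⟨by have := hk.1; omega, by have := hk.2; omega⟩
    refine hf (f^[k] v) ?_
    rw [← iterate_succ_apply' f k v]
    exact (hdom _ (mem_image_of_mem _ hk1) fun h => by have := hinj hk1 hk h; omega).mdom
  exact hdom _ (mem_image_of_mem _ (Ico_subset_Icc_self hi))
    fun h => hi.2.ne (hinj (Ico_subset_Icc_self hi) hk h)

theorem ProperSubsetsDominated.mdom_iterate_self (hmin : T.ProperSubsetsDominated)
    (hf : ∀ x, ¬ T.MDom x (f x)) {j : ℕ} (hj : 1 ≤ j) (hjn : j + 2 ≤ minimalPeriod f v) :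
    T.MDom (f^[j] v) v :=
  (hmin.mdomIn_iterate hf (b := 0) (m := minimalPeriod f v - 1) (by omega) (by omega)
    (fun h => by have := h.2; omega) ⟨le_rfl, hj⟩).mdom

theorem ProperSubsetsDominated.colour_eq_of_dom_iterate (hmin : T.ProperSubsetsDominated)
    (hf : ∀ x, ¬ T.MDom x (f x)) (hv : ¬ T.IncidentColour v c₀) {j : ℕ} (hj : 2 ≤ j)
    (hjn : j < minimalPeriod f v) (hb : T.beats v (f^[j] v)) (h : T.Dom c v (f^[j] v)) :
    T.colour v (f^[j] v) = c := by
  by_contra hne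
  obtain ⟨d, hd⟩ := hmin.mdom_iterate_self hf (v := v) (j := j - 1) (by omega) (by omega)
  have hsucc : f (f^[j - 1] v) = f^[j] v := by
    rw [← iterate_succ_apply' f, Nat.succ_eq_add_one, Nat.sub_add_cancel (by omega)]
  refine hf (f^[j - 1] v) (hsucc ▸ ?_)
  rcases fin_three_eq_or_eq (Ne.symm hne) (h.ne_of_not_incidentColour_left hv)
      ((Dom.of_beats hb rfl).ne_of_not_incidentColour_left hv)
      (hd.ne_of_not_incidentColour_right hv) with hdc | hdc
  · exact ⟨c, (hdc ▸ hd).trans h⟩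
  · exact ⟨_, (hdc ▸ hd).trans (.of_beats hb rfl)⟩

theorem colour_eq_of_dom_apply (hf : ∀ x, ¬ T.MDom x (f x)) (hv : ¬ T.IncidentColour v c₀)
    {φ ψ : Fin 3} (hφψ : φ ≠ ψ) (hφ : φ ≠ c₀) (hψ : ψ ≠ c₀) (hx : T.beats x v)
    (h : T.Dom φ v (f x)) : T.colour x v = ψ :=
  (fin_three_eq_or_eq hφψ hφ hψ
    ((Dom.of_beats hx rfl).ne_of_not_incidentColour_right hv)).resolve_left
    fun hκ => hf x ⟨φ, (Dom.of_beats hx hκ).trans h⟩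

theorem beatsWithoutReturn_iterate_pred (hf : ∀ x, ¬ T.MDom x (f x))
    (hn : 2 ≤ minimalPeriod f v) : T.BeatsWithoutReturn c₀ v (f^[minimalPeriod f v - 1] v) := by
  have hlast : ¬ T.MDom (f^[minimalPeriod f v - 1] v) v := by
    have := hf (f^[minimalPeriod f v - 1] v)
    rwa [← iterate_succ_apply' f, Nat.succ_eq_add_one, Nat.sub_add_cancel (by omega),
      iterate_minimalPeriod] at this
  have hne : v ≠ f^[minimalPeriod f v - 1] v := fun h => by
    have := iterate_injOn_Iio_minimalPeriod (f := f) (x := v) (x₁ := 0)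
      (x₂ := minimalPeriod f v - 1) (by simp; omega) (by simp; omega) h
    omega
  exact ⟨beats_of_not_mdom hne hlast, fun ψ _ _ h => hlast ⟨ψ, h⟩⟩

theorem exists_lt_beatsWithoutReturn (hT3 : ¬ T.HasT3) (hmin : T.ProperSubsetsDominated)
    (hf : ∀ x, ¬ T.MDom x (f x)) (hv : ¬ T.IncidentColour v c₀) {b : ℕ} (hb : 1 ≤ b)
    (hbn : b < minimalPeriod f v) (hI : T.BeatsWithoutReturn c₀ v (f^[b] v)) :
    ∃ b', 1 ≤ b' ∧ b' < b ∧ T.BeatsWithoutReturn c₀ v (f^[b'] v) := by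
  obtain ⟨hvb, hret⟩ := hI
  set φ := T.colour v (f^[b] v)
  have hφ₀ : φ ≠ c₀ := (Dom.of_beats hvb rfl).ne_of_not_incidentColour_left hv
  obtain ⟨b', hb'1, hb'b, hb', hdom⟩ :=
    Nat.exists_last_not (Q := fun i => T.Dom φ v (f^[i] v)) hb fun h => hf v ⟨φ, h⟩
  have hb'lt : b' < b := lt_of_le_of_ne hb'b (by rintro rfl; exact hb' (.of_beats hvb rfl))
  have hdom_succ : ∀ i, b' ≤ i → i < b → T.Dom φ v (f (f^[i] v)) := fun i h1 h2 =>
    iterate_succ_apply' f i v ▸ hdom (i + 1) (by omega) (by omega)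
  obtain ⟨χ, hχ⟩ := hmin.mdomIn_iterate hf (m := 0) hbn (by omega)
    (fun h => by have := h.1; omega) ⟨le_rfl, hb'lt⟩
  have hφχ : φ ≠ χ := by rintro rfl; exact hb' ((Dom.of_beats hvb rfl).trans hχ.dom)
  obtain ⟨ψ, hψ₀, hψφ⟩ := fin_three_exists_ne_ne c₀ φ
  have hvb' : T.beats v (f^[b'] v) := by
    by_contra hnb
    refine hnb (beats_of_domIn hT3 hφχ hψφ.symm ?_ ?_ hvb (hret ψ hψ₀ hψφ) hχ)
    · rintro _ ⟨i, hi, rfl⟩ hvi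
      have hib' : i ≠ b' := by rintro rfl; exact hnb hvi
      obtain ⟨hb'i, hib⟩ := hi
      exact hmin.colour_eq_of_dom_iterate hf hv (by omega) (by omega) hvi
        (hdom i (by omega) hib)
    · rintro _ ⟨i, hi, rfl⟩ hiv
      have hib : i ≠ b := by rintro rfl; exact T.asymm _ _ hvb hiv
      exact colour_eq_of_dom_apply hf hv hψφ.symm hφ₀ hψ₀ hiv
        (hdom_succ i hi.1 (lt_of_le_of_ne hi.2 hib))
  refine ⟨b', hb'1, hb'lt, hvb', fun ψ' hψ'₀ hψ' hret' => ?_⟩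
  have hφ' : T.colour v (f^[b'] v) ≠ φ := fun h => hb' (.of_beats hvb' h)
  obtain rfl : ψ' = φ := (fin_three_eq_or_eq hφ'.symm hφ₀
    ((Dom.of_beats hvb' rfl).ne_of_not_incidentColour_left hv) hψ'₀).resolve_right hψ'
  exact hf _ ⟨φ, hret'.trans (hdom_succ b' le_rfl hb'lt)⟩

theorem not_beatsWithoutReturn (hT3 : ¬ T.HasT3) (hmin : T.ProperSubsetsDominated)
    (hf : ∀ x, ¬ T.MDom x (f x)) (hv : ¬ T.IncidentColour v c₀) {b : ℕ} (hb : 1 ≤ b)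
    (hbn : b < minimalPeriod f v) : ¬ T.BeatsWithoutReturn c₀ v (f^[b] v) := by
  induction b using Nat.strong_induction_on with
  | _ b ih =>
    intro hI
    obtain ⟨b', hb'1, hb'b, hI'⟩ := exists_lt_beatsWithoutReturn hT3 hmin hf hv hb hbn hI
    exact ih b' hb'b hb'1 (hb'b.trans hbn) hI'

end Iterate

end CTournament

open CTournament in
theorem minimalCex_all_colours_general {V : Type*} (T : CTournament V)
    (h : T.MinimalCex) :
    ∀ (v : V) (c : Fin 3), T.IncidentColour v c := by
  obtain ⟨hT3, hnodom, hmin⟩ := h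
  intro v c₀
  by_contra hv
  push Not at hnodom
  choose f hne hf using hnodom
  have hn := two_le_minimalPeriod hne (ProperSubsetsDominated.mem_periodicPts hmin hf hne v)
  exact not_beatsWithoutReturn hT3 hmin hf hv (by omega) (by omega)
    (beatsWithoutReturn_iterate_pred hf hn)

/-- In a minimal counterexample every vertex is incident with
edges of all three colours. -/
theorem minimalCex_all_colours {V : Type*} [Fintype V] (T : CTournament V)
    (h : T.MinimalCex) :
    ∀ (v : V) (c : Fin 3), T.IncidentColour v c :=
  minimalCex_all_colours_general T h
end

section
/- Let D be a minimal counterexample, C its Hamilton cycle with the stated domination property, and x a vertex of D incident with no green edges such that the edge between x^- and x is red (directed from x^- to x). Then the sets B_b^+(x) and B_b^-(x) are both nonempty. -/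
/-!
Suppose `x` lies on no closed blue walk. Walking backwards around `C` from `x⁻`, every vertex
`v ∉ {x, x⁺}` reaches `x` by a red path: if `u` does, then `x` cannot reach `u⁻` in red (else
`u` would dominate its predecessor), so `x` reaches `u⁻` in blue, and then `u⁻` reaches `x` in red,
since a blue path would close a blue walk through `x`. Hence every edge leaving `x` is blue and every
edge entering `x` is red. By minimality `D - x` has a vertex dominating all others, and it must be
`x⁺`, since any other vertex would dominate its predecessor. So `x⁺` reaches `x⁻` by a
monochromatic path avoiding `x`. A red one followed by the red edge `x⁻x` reaches the predecessor
`x` of `x⁺`; a blue one preceded by the blue edge `xx⁺` reaches the predecessor `x⁻` of `x`; and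
along a green one `x` beats every vertex, as otherwise a `T_3` appears, so `x` would beat `x⁻`.
-/

theorem Equiv.Perm.forall_of_symm_closed {V : Type*} {σ : Equiv.Perm V}
    (hσ : ∀ v w : V, ∃ n : ℕ, (⇑σ)^[n] v = w) {P : V → Prop} {x : V} (hx : P x)
    (hP : ∀ u, P u → P (σ.symm u)) (v : V) : P v := by
  obtain ⟨n, hn⟩ := hσ v x
  induction n generalizing v with
  | zero =>
    obtain rfl : v = x := hn
    exact hx
  | succ n ih =>
    simpa using hP _ (ih (σ v) (by rwa [← Function.iterate_succ_apply]))

namespace CTournament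

theorem eq_blue_of_ne_red_of_ne_green {c : Fin 3} (hr : c ≠ red) (hg : c ≠ green) : c = blue := by
  revert c; decide

theorem eq_red_of_ne_blue_of_ne_green {c : Fin 3} (hb : c ≠ blue) (hg : c ≠ green) : c = red := by
  revert c; decide

variable {V : Type*} {T : CTournament V}

theorem DomIn.dom_s11 {S : Set V} {c : Fin 3} {a b : V} (h : T.DomIn S c a b) : T.Dom c a b :=
  Relation.TransGen.mono (fun _ _ hab => ⟨hab.2.2.1, hab.2.2.2⟩) _ _ h

theorem MDomIn.mdom_s11 {S : Set V} {a b : V} (h : T.MDomIn S a b) : T.MDom a b :=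
  let ⟨c, hc⟩ := h; ⟨c, hc.dom_s11⟩

theorem MDom.dom_blue {a b : V} (h : T.MDom a b) (hr : ¬T.Dom red a b) (hg : ¬T.Dom green a b) :
    T.Dom blue a b := by
  obtain ⟨c, hc⟩ := h
  rwa [← eq_blue_of_ne_red_of_ne_green (c := c) (by rintro rfl; exact hr hc)
    (by rintro rfl; exact hg hc)]

theorem MDom.dom_red {a b : V} (h : T.MDom a b) (hb : ¬T.Dom blue a b) (hg : ¬T.Dom green a b) :
    T.Dom red a b := by
  obtain ⟨c, hc⟩ := h
  rwa [← eq_red_of_ne_blue_of_ne_green (c := c) (by rintro rfl; exact hb hc)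
    (by rintro rfl; exact hg hc)]

theorem not_dom_from_of_not_incidentColour {x : V} {c : Fin 3} (hx : ¬T.IncidentColour x c)
    (v : V) : ¬T.Dom c x v := fun h =>
  let ⟨b, hb, _⟩ := Relation.TransGen.head'_iff.mp h; hx ⟨b, Or.inl hb⟩

theorem not_dom_to_of_not_incidentColour {x : V} {c : Fin 3} (hx : ¬T.IncidentColour x c)
    (v : V) : ¬T.Dom c v x := fun h =>
  let ⟨b, _, hb⟩ := Relation.TransGen.tail'_iff.mp h; hx ⟨b, Or.inr hb⟩

theorem Bbplus_nonempty_of_dom_blue_self {x : V} (h : T.Dom blue x x) : (T.Bbplus x).Nonempty := by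
  obtain ⟨b, hxb, hbx⟩ := Relation.TransGen.head'_iff.mp h
  rcases Relation.reflTransGen_iff_eq_or_transGen.mp hbx with rfl | hbx
  · exact (T.irrefl _ hxb.1).elim
  · exact ⟨b, hxb, hbx⟩

theorem Bbminus_nonempty_of_dom_blue_self {x : V} (h : T.Dom blue x x) :
    (T.Bbminus x).Nonempty := by
  obtain ⟨b, hxb, hbx⟩ := Relation.TransGen.tail'_iff.mp h
  rcases Relation.reflTransGen_iff_eq_or_transGen.mp hxb with rfl | hxb
  · exact (T.irrefl _ hbx.1).elim
  · exact ⟨b, hbx, hxb⟩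

/-- Each edge of the path would otherwise close, together with `x`, a cyclic triangle in three
colours. -/
theorem beats_of_beats_of_dom (hT3 : ¬T.HasT3) {x y z : V} {a b c : Fin 3}
    (hout : ∀ v, T.beats x v → T.colour x v = a) (hin : ∀ v, T.beats v x → T.colour v x = b)
    (hab : a ≠ b) (hac : a ≠ c) (hbc : b ≠ c) (hy : T.beats x y) (hyz : T.Dom c y z) :
    T.beats x z := by
  have step : ∀ u w, T.beats x u → T.beats u w ∧ T.colour u w = c → T.beats x w := by
    rintro u w hu ⟨huw, hc⟩
    have hwx : w ≠ x := by
      rintro rfl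
      exact hbc ((hin u huw).symm.trans hc)
    refine (T.total x w hwx.symm).resolve_right fun hwx' => hT3 ⟨x, u, w, hu, huw, hwx', ?_⟩
    rw [hout u hu, hc, hin w hwx']
    exact ⟨hac, hbc.symm, hab⟩
  induction hyz with
  | single hyz => exact step _ _ hy hyz
  | tail _ hz ih => exact step _ _ ih hz

section HamCycle

variable {σ : Equiv.Perm V}

theorem IsHamCycle.apply_ne (hσ : T.IsHamCycle σ) (x : V) : σ x ≠ x := fun e =>
  T.irrefl x (by simpa only [e] using hσ.1 x)

theorem IsHamCycle.symm_apply_ne (hσ : T.IsHamCycle σ) (x : V) : σ.symm x ≠ x := fun e =>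
  hσ.apply_ne x (σ.symm_apply_eq.mp e).symm

theorem IsHamCycle.apply_ne_symm_apply (hσ : T.IsHamCycle σ) (x : V) : σ x ≠ σ.symm x := fun e =>
  T.asymm _ _ (hσ.1 x) (by rw [e]; simpa only [Equiv.apply_symm_apply] using hσ.1 (σ.symm x))

theorem eq_apply_of_dominates_compl_singleton (hσ : T.IsHamCycle σ) (hprop : T.HamDomProp σ)
    {x w : V} (hking : ∀ y ∈ ({x}ᶜ : Set V), y ≠ w → T.MDomIn {x}ᶜ w y) : w = σ x := by
  by_contra hne
  have hpw : σ.symm w ≠ x := fun e => hne (σ.symm_apply_eq.mp e)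
  exact hprop.2 w (hking _ hpw (hσ.symm_apply_ne w)).mdom_s11

theorem dom_red_symm_apply (hprop : T.HamDomProp σ) {x u : V} (hx : ¬T.IncidentColour x green)
    (hblue : ¬T.Dom blue x x) (hu : T.Dom red u x) (hux : u ≠ x) (hvx : σ.symm u ≠ x)
    (hvs : σ.symm u ≠ σ x) : T.Dom red (σ.symm u) x := by
  have hnotR : ¬T.Dom red x (σ.symm u) := fun hR => hprop.2 u ⟨red, hu.trans hR⟩
  have hB : T.Dom blue x (σ.symm u) :=
    (hprop.1 x _ hvx (by simpa using hux)).dom_blue hnotR (not_dom_from_of_not_incidentColour hx _)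
  exact (hprop.1 _ x hvx.symm fun e => hvs (σ.symm_apply_eq.mp e.symm)).dom_red
    (fun hB' => hblue (hB.trans hB')) (not_dom_to_of_not_incidentColour hx _)

theorem dom_red_to (hσ : T.IsHamCycle σ) (hprop : T.HamDomProp σ) {x : V}
    (hx : ¬T.IncidentColour x green) (hpred : T.beats (σ.symm x) x)
    (hpredred : T.colour (σ.symm x) x = red) (hblue : ¬T.Dom blue x x) {v : V} (hvx : v ≠ x)
    (hvs : v ≠ σ x) : T.Dom red v x := by
  have hpx : T.Dom red (σ.symm x) x := .single ⟨hpred, hpredred⟩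
  suffices h : ∀ v, v = x ∨ v = σ x ∨ T.Dom red v x from (h v).resolve_left hvx |>.resolve_left hvs
  refine Equiv.Perm.forall_of_symm_closed hσ.2 (Or.inl rfl) ?_
  rintro u (rfl | rfl | hu)
  · exact .inr (.inr hpx)
  · exact .inl (by simp)
  · rcases eq_or_ne u x with rfl | hux
    · exact .inr (.inr hpx)
    by_cases hvx : σ.symm u = x
    · exact .inl hvx
    by_cases hvs : σ.symm u = σ x
    · exact .inr (.inl hvs)
    exact .inr (.inr (dom_red_symm_apply hprop hx hblue hu hux hvx hvs))

theorem colour_eq_blue_of_beats_from (hσ : T.IsHamCycle σ) (hprop : T.HamDomProp σ) {x : V}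
    (hx : ¬T.IncidentColour x green) (hpred : T.beats (σ.symm x) x)
    (hpredred : T.colour (σ.symm x) x = red) (hblue : ¬T.Dom blue x x) {v : V}
    (hv : T.beats x v) : T.colour x v = blue := by
  refine eq_blue_of_ne_red_of_ne_green (fun hr => ?_) (fun hg => hx ⟨v, .inl ⟨hv, hg⟩⟩)
  have hR : T.Dom red x v := .single ⟨hv, hr⟩
  by_cases hvp : v = σ.symm x
  · exact hprop.2 x ⟨red, hvp ▸ hR⟩
  have hσv : T.Dom red (σ v) x := dom_red_to hσ hprop hx hpred hpredred hblue
    (fun e => hvp (σ.eq_symm_apply.mpr e)) (fun e => T.irrefl x (σ.injective e ▸ hv))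
  exact hprop.2 (σ v) ⟨red, by rw [Equiv.symm_apply_apply]; exact hσv.trans hR⟩

theorem dom_blue_from (hσ : T.IsHamCycle σ) (hprop : T.HamDomProp σ) {x : V}
    (hx : ¬T.IncidentColour x green) (hpred : T.beats (σ.symm x) x)
    (hpredred : T.colour (σ.symm x) x = red) (hblue : ¬T.Dom blue x x) {v : V} (hvx : v ≠ x)
    (hvp : v ≠ σ.symm x) : T.Dom blue x v := by
  refine (hprop.1 x v hvx hvp).dom_blue (fun hR => ?_) (not_dom_from_of_not_incidentColour hx _)
  obtain ⟨b, hxb, -⟩ := Relation.TransGen.head'_iff.mp hR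
  rw [colour_eq_blue_of_beats_from hσ hprop hx hpred hpredred hblue hxb.1] at hxb
  exact absurd hxb.2 (by decide)

theorem colour_eq_red_of_beats_to (hσ : T.IsHamCycle σ) (hprop : T.HamDomProp σ) {x : V}
    (hx : ¬T.IncidentColour x green) (hpred : T.beats (σ.symm x) x)
    (hpredred : T.colour (σ.symm x) x = red) (hblue : ¬T.Dom blue x x) {v : V}
    (hv : T.beats v x) : T.colour v x = red := by
  by_cases hvp : v = σ.symm x
  · exact hvp ▸ hpredred
  refine eq_red_of_ne_blue_of_ne_green (fun hb => hblue ?_) (fun hg => hx ⟨v, .inr ⟨hv, hg⟩⟩)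
  have hvx : v ≠ x := fun e => T.irrefl x (e ▸ hv)
  exact (dom_blue_from hσ hprop hx hpred hpredred hblue hvx hvp).trans (.single ⟨hv, hb⟩)

theorem dom_blue_self (h : T.MinimalCex) (hσ : T.IsHamCycle σ) (hprop : T.HamDomProp σ) {x : V}
    (hx : ¬T.IncidentColour x green) (hpred : T.beats (σ.symm x) x)
    (hpredred : T.colour (σ.symm x) x = red) : T.Dom blue x x := by
  by_contra hblue
  obtain ⟨hT3, -, hmin⟩ := h
  have hpx : σ.symm x ∈ ({x}ᶜ : Set V) := hσ.symm_apply_ne x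
  obtain ⟨w, -, hking⟩ := hmin {x}ᶜ ⟨_, hpx⟩ fun e => (e ▸ Set.mem_univ x : x ∈ ({x}ᶜ : Set V)) rfl
  obtain rfl := eq_apply_of_dominates_compl_singleton hσ hprop hking
  obtain ⟨c, hc⟩ := hking _ hpx (hσ.apply_ne_symm_apply x).symm
  replace hc := hc.dom_s11
  fin_cases c
  · exact hprop.2 (σ x) ⟨red, by rw [Equiv.symm_apply_apply]; exact hc.tail ⟨hpred, hpredred⟩⟩
  · exact hprop.2 x ⟨blue, (dom_blue_from hσ hprop hx hpred hpredred hblue (hσ.apply_ne x)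
      (hσ.apply_ne_symm_apply x)).trans hc⟩
  · exact T.asymm _ _ hpred <| beats_of_beats_of_dom hT3
      (fun _ => colour_eq_blue_of_beats_from hσ hprop hx hpred hpredred hblue)
      (fun _ => colour_eq_red_of_beats_to hσ hprop hx hpred hpredred hblue)
      (by decide) (by decide) (by decide) (hσ.1 x) hc

end HamCycle

end CTournament

theorem Bbplus_Bbminus_nonempty_general {V : Type*} (T : CTournament V)
    (h : T.MinimalCex) (σ : Equiv.Perm V)
    (hσ : T.IsHamCycle σ) (hprop : T.HamDomProp σ)
    (x : V) (hx : ¬ T.IncidentColour x CTournament.green)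
    (hpred : T.beats (σ.symm x) x)
    (hpredred : T.colour (σ.symm x) x = CTournament.red) :
    (T.Bbplus x).Nonempty ∧ (T.Bbminus x).Nonempty := by
  have hblue := CTournament.dom_blue_self h hσ hprop hx hpred hpredred
  exact ⟨CTournament.Bbplus_nonempty_of_dom_blue_self hblue,
    CTournament.Bbminus_nonempty_of_dom_blue_self hblue⟩

/-- In a minimal counterexample with Hamilton cycle `σ`, if `x`
is incident with no green edge and the edge from `x⁻` to `x` is red, then the sets
`B_b⁺(x)` and `B_b⁻(x)` are both nonempty. -/
theorem Bbplus_Bbminus_nonempty {V : Type*} [Fintype V] (T : CTournament V)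
    (h : T.MinimalCex) (σ : Equiv.Perm V)
    (hσ : T.IsHamCycle σ) (hprop : T.HamDomProp σ)
    (x : V) (hx : ¬ T.IncidentColour x CTournament.green)
    (hpred : T.beats (σ.symm x) x)
    (hpredred : T.colour (σ.symm x) x = CTournament.red) :
    (T.Bbplus x).Nonempty ∧ (T.Bbminus x).Nonempty :=
  Bbplus_Bbminus_nonempty_general T h σ hσ hprop x hx hpred hpredred
end
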